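/- arXiv:2508.10684 — 3 statements merged into one kernel-verified Lean document; each statement's English description precedes it below -/
import Mathlib

section
/- Let n ≥ 1 and let u, v ∈ ℝⁿ be column vectors with dot product vᵀu = −1, and set A = u vᵀ. Then exp(λ · A) converges to I + A as λ → ∞ (entrywise, equivalently in any matrix norm). -/
set_option maxHeartbeats 1000000

open Matrix Filter NormedSpace

lemma aux_sq (n : ℕ) (u v : Fin n → ℝ) :
    vecMulVec u v * vecMulVec u v = (v ⬝ᵥ u) • vecMulVec u v := by
  ext i j
  simp [Matrix.mul_apply, vecMulVec_apply, dotProduct, Finset.mul_sum, Finset.sum_mul]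
  ring_nf
  congr 1
  ext k
  ring

lemma aux_pow (n : ℕ) (u v : Fin n → ℝ) (huv : v ⬝ᵥ u = -1) (k : ℕ) :
    (vecMulVec u v) ^ (k + 1) = ((-1 : ℝ) ^ k) • vecMulVec u v := by
  induction k with
  | zero => simp
  | succ k ih =>
    rw [pow_succ, ih, Matrix.smul_mul, aux_sq, huv, smul_smul, pow_succ]

lemma aux_exp (n : ℕ) (u v : Fin n → ℝ) (huv : v ⬝ᵥ u = -1) (lam : ℝ) :
    NormedSpace.exp (lam • vecMulVec u v)
      = 1 + (1 - Real.exp (-lam)) • vecMulVec u v := by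
  letI : SeminormedRing (Matrix (Fin n) (Fin n) ℝ) := Matrix.linftyOpSemiNormedRing
  letI : NormedRing (Matrix (Fin n) (Fin n) ℝ) := Matrix.linftyOpNormedRing
  letI : NormedAlgebra ℝ (Matrix (Fin n) (Fin n) ℝ) := Matrix.linftyOpNormedAlgebra
  set A := vecMulVec u v with hA
  have hsum : Summable (fun k : ℕ => ((Nat.factorial k : ℝ))⁻¹ • (lam • A) ^ k) :=
    expSeries_summable' (𝕂 := ℝ) (lam • A)
  have hterm : ∀ k : ℕ, (((Nat.factorial (k+1) : ℕ) : ℝ))⁻¹ • (lam • A) ^ (k+1)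
      = (((Nat.factorial (k+1) : ℕ) : ℝ)⁻¹ * lam ^ (k+1) * (-1) ^ k) • A := by
    intro k
    rw [smul_pow, aux_pow n u v huv k, smul_smul, smul_smul]
  have hreal : Summable (fun k : ℕ => ((Nat.factorial k : ℝ))⁻¹ • (-lam) ^ k) :=
    expSeries_summable' (𝕂 := ℝ) (-lam)
  have hrealtail : Summable (fun k : ℕ => ((Nat.factorial (k+1) : ℝ))⁻¹ • (-lam) ^ (k+1)) :=
    (summable_nat_add_iff 1).mpr hreal
  have hgeq : (fun k : ℕ => (((Nat.factorial (k+1) : ℕ) : ℝ)⁻¹ * lam ^ (k+1) * (-1) ^ k))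
      = fun k : ℕ => -(((Nat.factorial (k+1) : ℝ))⁻¹ • (-lam) ^ (k+1)) := by
    funext k
    rw [smul_eq_mul, neg_pow]
    ring
  have hg : Summable (fun k : ℕ => (((Nat.factorial (k+1) : ℕ) : ℝ)⁻¹ * lam ^ (k+1) * (-1) ^ k)) := by
    rw [hgeq]; exact hrealtail.neg
  have hexpreal : Real.exp (-lam) = ∑' k : ℕ, ((Nat.factorial k : ℝ))⁻¹ • (-lam) ^ k := by
    rw [Real.exp_eq_exp_ℝ, NormedSpace.exp_eq_tsum (𝕂 := ℝ)]
  have htailsum : (∑' k : ℕ, ((Nat.factorial (k+1) : ℝ))⁻¹ • (-lam) ^ (k+1)) = Real.exp (-lam) - 1 := by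
    rw [hexpreal, hreal.tsum_eq_zero_add]
    simp
  rw [NormedSpace.exp_eq_tsum (𝕂 := ℝ)]
  beta_reduce
  rw [hsum.tsum_eq_zero_add]
  simp only [pow_zero, Nat.factorial_zero, Nat.cast_one, inv_one, one_smul]
  congr 1
  calc (∑' k : ℕ, ((Nat.factorial (k+1) : ℝ))⁻¹ • (lam • A) ^ (k+1))
      = ∑' k : ℕ, (((Nat.factorial (k+1) : ℕ) : ℝ)⁻¹ * lam ^ (k+1) * (-1) ^ k) • A := by
        exact tsum_congr fun k => hterm k
    _ = (∑' k : ℕ, (((Nat.factorial (k+1) : ℕ) : ℝ)⁻¹ * lam ^ (k+1) * (-1) ^ k)) • A := by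
        exact (hg.tsum_smul_const A).symm ▸ rfl
    _ = (1 - Real.exp (-lam)) • A := by
        rw [hgeq, tsum_neg, htailsum]
        ring_nf

/-- **Limit of the rank-one matrix exponential.** If `u v : ℝⁿ` satisfy `vᵀ u = -1`
and `A = u vᵀ`, then `exp (λ • A) → I + A` as `λ → ∞`. -/
theorem tendsto_exp_smul_rank_one (n : ℕ) (hn : 1 ≤ n) (u v : Fin n → ℝ)
    (huv : v ⬝ᵥ u = -1) :
    Filter.Tendsto (fun lam : ℝ => NormedSpace.exp (lam • Matrix.vecMulVec u v))
      Filter.atTop (nhds (1 + Matrix.vecMulVec u v)) := by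
  simp only [fun lam => aux_exp n u v huv lam]
  have h0 : Tendsto (fun lam : ℝ => 1 - Real.exp (-lam)) atTop (nhds 1) := by
    simpa using (tendsto_const_nhds (α := ℝ) (x := (1:ℝ)) (f := atTop)).sub
      Real.tendsto_exp_neg_atTop_nhds_zero
  have h1 : Tendsto (fun lam : ℝ => (1 - Real.exp (-lam)) • vecMulVec u v) atTop
      (nhds ((1:ℝ) • vecMulVec u v)) := h0.smul_const _
  simpa using (tendsto_const_nhds (x := (1 : Matrix (Fin n) (Fin n) ℝ))).add h1
end

section
/- Let 𝒳 be a finite type and Q⁰ : ℝ → 𝒳 → 𝒳 → ℝ. Let p, W : ℝ → 𝒳 → ℝ be differentiable in t for each x, with W(t)(x) > 0 for all t, x. Suppose that for all t and x: (i) ∂_t p(t)(x) = Σ_{y ≠ x} ( Q⁰(t)(y,x)·p(t)(y) − Q⁰(t)(x,y)·p(t)(x) ), and (ii) ∂_t W(t)(x) = Σ_{y ≠ x} Q⁰(t)(x,y)·( W(t)(x) − W(t)(y) ). Define Q*(t)(x,y) = Q⁰(t)(x,y)·W(t)(y)/W(t)(x) for y ≠ x, and h(t)(x) = p(t)(x)·W(t)(x).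 Then for all t and x: ∂_t h(t)(x) = Σ_{y ≠ x} ( Q*(t)(y,x)·h(t)(y) − Q*(t)(x,y)·h(t)(x) ). -/
open Finset

/-- **The optimally controlled marginal solves the forward equation.** If `p` solves
the Kolmogorov forward equation for the reference generator `Q⁰` and `W > 0` solves
the exponential form of the HJB equation `∂ₜ W(t)(x) = ∑_{y≠x} Q⁰(t)(x,y)(W(t)(x) - W(t)(y))`,
then `h = p · W` solves the Kolmogorov forward equation for the tilted generator
`Q*(t)(x,y) = Q⁰(t)(x,y) W(t)(y) / W(t)(x)`. -/
theorem tilted_forward_equation {𝒳 : Type*} [Fintype 𝒳] [DecidableEq 𝒳]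
    (Q0 : ℝ → 𝒳 → 𝒳 → ℝ) (p W : ℝ → 𝒳 → ℝ)
    (hWpos : ∀ (t : ℝ) (x : 𝒳), 0 < W t x)
    (hp : ∀ (t : ℝ) (x : 𝒳),
      HasDerivAt (fun s => p s x)
        (∑ y ∈ Finset.univ.filter (fun y => y ≠ x),
          (Q0 t y x * p t y - Q0 t x y * p t x)) t)
    (hW : ∀ (t : ℝ) (x : 𝒳),
      HasDerivAt (fun s => W s x)
        (∑ y ∈ Finset.univ.filter (fun y => y ≠ x),
          Q0 t x y * (W t x - W t y)) t)
    (Qstar : ℝ → 𝒳 → 𝒳 → ℝ)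
    (hQstar : ∀ (t : ℝ) (x y : 𝒳), y ≠ x → Qstar t x y = Q0 t x y * W t y / W t x)
    (h : ℝ → 𝒳 → ℝ) (hh : ∀ (t : ℝ) (x : 𝒳), h t x = p t x * W t x) :
    ∀ (t : ℝ) (x : 𝒳),
      HasDerivAt (fun s => h s x)
        (∑ y ∈ Finset.univ.filter (fun y => y ≠ x),
          (Qstar t y x * h t y - Qstar t x y * h t x)) t := by
  intro t x
  have key : (fun s => h s x) = fun s => p s x * W s x := funext fun s => hh s x
  rw [key]
  have hd : HasDerivAt (fun s => p s x * W s x) _ t := (hp t x).mul (hW t x)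
  convert hd using 1
  rw [Finset.sum_mul, Finset.mul_sum, ← Finset.sum_add_distrib]
  refine Finset.sum_congr rfl fun y hy => ?_
  have hyx : y ≠ x := (Finset.mem_filter.mp hy).2
  rw [hQstar t x y hyx, hQstar t y x hyx.symm, hh, hh]
  have h1 := (hWpos t x).ne'
  have h2 := (hWpos t y).ne'
  field_simp
  ring
end

section
/- Let 𝒳 be a finite type, p : 𝒳 → ℝ nonnegative with Σ_{x₁} p(x₁) = 1, and q : 𝒳 → 𝒳 → ℝ with q(x₁)(x_t) > 0 for all x₁, x_t and Σ_{x_t} q(x₁)(x_t) = 1 for every x₁. Define the marginal m(x_t) = Σ_{x₁} p(x₁)·q(x₁)(x_t) and assume m(x_t) > 0 for all x_t. Then for every f : 𝒳 → 𝒳 → ℝ: Σ_{x₁} p(x₁) Σ_{x_t} q(x₁)(x_t) Σ_{y ≠ x_t} ( m(y)/m(x_t) )·f(x_t)(y) = Σ_{x₁} p(x₁) Σ_{x_t} q(x₁)(x_t) Σ_{y ≠ x_t} ( q(x₁)(y)/q(x₁)(x_t) )·f(x_t)(y), and both sides equal Σ_{x_t} Σ_{y ≠ x_t} m(y)·f(x_t)(y).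 (The denoising cross-entropy trick: the intractable marginal ratio can be replaced by the conditional ratio.) -/
open Finset

/-- **The denoising cross-entropy trick.** The intractable marginal ratio
`m(y)/m(x_t)` can be replaced by the conditional ratio `q(x₁)(y)/q(x₁)(x_t)` under the
joint law of `(X₁, X_t)`, and both expressions equal `∑_{x_t} ∑_{y ≠ x_t} m(y) f(x_t, y)`. -/
theorem denoising_cross_entropy_trick {𝒳 : Type*} [Fintype 𝒳] [DecidableEq 𝒳]
    (p : 𝒳 → ℝ) (hp : ∀ x, 0 ≤ p x) (hp1 : ∑ x : 𝒳, p x = 1)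
    (q : 𝒳 → 𝒳 → ℝ) (hq : ∀ x₁ xt, 0 < q x₁ xt) (hq1 : ∀ x₁, ∑ xt : 𝒳, q x₁ xt = 1)
    (m : 𝒳 → ℝ) (hm : ∀ xt, m xt = ∑ x₁ : 𝒳, p x₁ * q x₁ xt)
    (hmpos : ∀ xt, 0 < m xt) (f : 𝒳 → 𝒳 → ℝ) :
    (∑ x₁ : 𝒳, p x₁ * ∑ xt : 𝒳, q x₁ xt *
        ∑ y ∈ Finset.univ.filter (fun y => y ≠ xt), (m y / m xt) * f xt y) =
      (∑ x₁ : 𝒳, p x₁ * ∑ xt : 𝒳, q x₁ xt *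
        ∑ y ∈ Finset.univ.filter (fun y => y ≠ xt), (q x₁ y / q x₁ xt) * f xt y) ∧
    (∑ x₁ : 𝒳, p x₁ * ∑ xt : 𝒳, q x₁ xt *
        ∑ y ∈ Finset.univ.filter (fun y => y ≠ xt), (m y / m xt) * f xt y) =
      ∑ xt : 𝒳, ∑ y ∈ Finset.univ.filter (fun y => y ≠ xt), m y * f xt y := by
  have hL : (∑ x₁ : 𝒳, p x₁ * ∑ xt : 𝒳, q x₁ xt *
        ∑ y ∈ Finset.univ.filter (fun y => y ≠ xt), (m y / m xt) * f xt y) =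
      ∑ xt : 𝒳, ∑ y ∈ Finset.univ.filter (fun y => y ≠ xt), m y * f xt y := by
    simp_rw [Finset.mul_sum]
    rw [Finset.sum_comm]
    refine Finset.sum_congr rfl fun xt _ => ?_
    rw [Finset.sum_comm]
    refine Finset.sum_congr rfl fun y _ => ?_
    simp_rw [← mul_assoc]
    rw [← Finset.sum_mul, ← Finset.sum_mul, ← hm]
    have h : m xt * (m y / m xt) = m y := by
      rw [mul_comm, div_mul_cancel₀ _ (hmpos xt).ne']
    rw [h]
  have hR : (∑ x₁ : 𝒳, p x₁ * ∑ xt : 𝒳, q x₁ xt *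
        ∑ y ∈ Finset.univ.filter (fun y => y ≠ xt), (q x₁ y / q x₁ xt) * f xt y) =
      ∑ xt : 𝒳, ∑ y ∈ Finset.univ.filter (fun y => y ≠ xt), m y * f xt y := by
    have step : ∀ x₁ xt, q x₁ xt *
        ∑ y ∈ Finset.univ.filter (fun y => y ≠ xt), (q x₁ y / q x₁ xt) * f xt y =
        ∑ y ∈ Finset.univ.filter (fun y => y ≠ xt), q x₁ y * f xt y := by
      intro x₁ xt
      rw [Finset.mul_sum]
      refine Finset.sum_congr rfl fun y _ => ?_
      rw [← mul_assoc, mul_div_cancel₀ _ (hq x₁ xt).ne']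
    simp_rw [step, Finset.mul_sum]
    rw [Finset.sum_comm]
    refine Finset.sum_congr rfl fun xt _ => ?_
    rw [Finset.sum_comm]
    refine Finset.sum_congr rfl fun y _ => ?_
    simp_rw [← mul_assoc]
    rw [← Finset.sum_mul, ← hm]
  exact ⟨hL.trans hR.symm, hL⟩
end
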